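/- CSS Cleaning Lemma: Let P^X = F_2^n and P^Z = F_2^n with the standard bilinear pairing ⟨x,z⟩ = Σ_i x_i z_i. Let G^X ≤ P^X and G^Z ≤ P^Z be subspaces, and set S^Z = G^Z ∩ (G^X)^⊥ and S^X = G^X ∩ (G^Z)^⊥ (annihilators under the pairing). Assume k := n − dim G^X − dim S^Z = n − dim G^Z − dim S^X. For a partition of coordinates into M and M^c, define g_bare^Z(M) = dim((G^X)^⊥ ∩ P^Z_M) − dim(S^Z ∩ P^Z_M) and g^X(M^c) = dim((S^Z)^⊥ ∩ P^X_{M^c}) − dim(G^X ∩ P^X_{M^c}). Then g_bare^Z(M) + g^X(M^c) = k. -/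

import Mathlib

/-!
Since `P_M = (P_{Mᶜ})^⊥`, the space `W^⊥ ∩ P_M` is the annihilator of `W + P_{Mᶜ}`, so
`dim (W^⊥ ∩ P_M) = n - dim W - dim P_{Mᶜ} + dim (W ∩ P_{Mᶜ})`. Applying this to `W = G^X` on `M`
and to `W = S^Z` on `Mᶜ` and adding, the terms `dim P_M + dim P_{Mᶜ} = n` cancel against one `n`,
leaving `n - dim G^X - dim S^Z = k`. The inclusions `S^Z ≤ (G^X)^⊥` and `G^X ≤ (S^Z)^⊥` keep the
natural-number subtractions from truncating.
-/

open Module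

/-- The subspace of vectors of `F_2^n` supported on a set `M` of coordinates. -/
def suppSub {n : ℕ} (M : Set (Fin n)) : Submodule (ZMod 2) (Fin n → ZMod 2) where
  carrier := {v | ∀ i ∉ M, v i = 0}
  add_mem' := by
    intro a b ha hb i hi
    simp [ha i hi, hb i hi]
  zero_mem' := by intro i _; rfl
  smul_mem' := by
    intro c a ha i hi
    simp [ha i hi]

/-- The annihilator of a subspace of `F_2^n` with respect to the standard
bilinear pairing `⟨x, z⟩ = Σ_i x_i z_i`. -/
def pairPerp {n : ℕ} (W : Submodule (ZMod 2) (Fin n → ZMod 2)) :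
    Submodule (ZMod 2) (Fin n → ZMod 2) where
  carrier := {z | ∀ x ∈ W, ∑ i, x i * z i = 0}
  add_mem' := by
    intro a b ha hb x hx
    simp only [Pi.add_apply, mul_add, Finset.sum_add_distrib, ha x hx, hb x hx, add_zero]
  zero_mem' := by intro x _; simp
  smul_mem' := by
    intro c a ha x hx
    simp only [Pi.smul_apply, smul_eq_mul, mul_left_comm, ← Finset.mul_sum, ha x hx, mul_zero]

namespace LinearMap.BilinForm

theorem orthogonal_sup {R M : Type*} [CommSemiring R] [AddCommMonoid M] [Module R M]
    (B : LinearMap.BilinForm R M) (W U : Submodule R M) :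
    B.orthogonal (W ⊔ U) = B.orthogonal W ⊓ B.orthogonal U := by
  ext z
  simp only [Submodule.mem_inf, mem_orthogonal_iff]
  refine ⟨fun hz => ⟨fun x hx => hz x (Submodule.mem_sup_left hx),
    fun x hx => hz x (Submodule.mem_sup_right hx)⟩, ?_⟩
  rintro ⟨hW, hU⟩ x hx
  obtain ⟨w, hw, u, hu, rfl⟩ := Submodule.mem_sup.mp hx
  rw [map_add, LinearMap.add_apply, hW w hw, hU u hu, add_zero]

theorem finrank_orthogonal_inf_orthogonal_add {K V : Type*} [Field K] [AddCommGroup V]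
    [Module K V] [FiniteDimensional K V] {B : LinearMap.BilinForm K V} (hB : B.Nondegenerate)
    (W U : Submodule K V) :
    finrank K (B.orthogonal W ⊓ B.orthogonal U : Submodule K V) + finrank K W + finrank K U =
      finrank K V + finrank K (W ⊓ U : Submodule K V) := by
  have h_perp := finrank_orthogonal hB (W ⊔ U)
  have h_sup := Submodule.finrank_sup_add_finrank_inf_eq W U
  have h_le := Submodule.finrank_le (W ⊔ U)
  rw [← orthogonal_sup]
  omega

end LinearMap.BilinForm

section DotProduct

variable {R ι : Type*} [CommRing R] [Fintype ι]

theorem dotProductBilin_nondegenerate :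
    (dotProductBilin R R : LinearMap.BilinForm R (ι → R)).Nondegenerate :=
  ⟨fun _ hv => dotProduct_eq_zero_iff.mp hv,
    fun _ hv => dotProduct_eq_zero_iff.mp fun w => (dotProduct_comm _ _).trans (hv w)⟩

theorem dotProductBilin_isRefl : (dotProductBilin R R : LinearMap.BilinForm R (ι → R)).IsRefl :=
  fun v w h => (dotProduct_comm w v).trans h

end DotProduct

section CSS

variable {n : ℕ}

theorem pairPerp_eq_orthogonal (W : Submodule (ZMod 2) (Fin n → ZMod 2)) :
    pairPerp W = LinearMap.BilinForm.orthogonal (dotProductBilin (ZMod 2) (ZMod 2)) W :=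
  rfl

theorem le_pairPerp_pairPerp (W : Submodule (ZMod 2) (Fin n → ZMod 2)) :
    W ≤ pairPerp (pairPerp W) :=
  LinearMap.BilinForm.le_orthogonal_orthogonal dotProductBilin_isRefl

theorem pairPerp_anti {W U : Submodule (ZMod 2) (Fin n → ZMod 2)} (h : W ≤ U) :
    pairPerp U ≤ pairPerp W := by
  simp only [pairPerp_eq_orthogonal]
  exact LinearMap.BilinForm.orthogonal_le h

theorem pairPerp_suppSub (M : Set (Fin n)) : pairPerp (suppSub M) = suppSub Mᶜ := by
  ext z
  refine ⟨fun hz i hi => ?_, fun hz x hx => Finset.sum_eq_zero fun i _ => ?_⟩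
  · have hiM : i ∈ M := Set.notMem_compl_iff.mp hi
    have h_single : (Pi.single i 1 : Fin n → ZMod 2) ∈ suppSub M := fun j hj =>
      Pi.single_eq_of_ne (ne_of_mem_of_not_mem hiM hj).symm 1
    calc z i = Pi.single i 1 ⬝ᵥ z := by rw [single_dotProduct, one_mul]
      _ = 0 := hz _ h_single
  · by_cases hi : i ∈ M
    · rw [hz i (Set.notMem_compl_iff.mpr hi), mul_zero]
    · rw [hx i hi, zero_mul]

theorem finrank_suppSub_add_finrank_suppSub_compl (M : Set (Fin n)) :
    finrank (ZMod 2) (suppSub M) + finrank (ZMod 2) (suppSub Mᶜ) = n := by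
  have h_perp := LinearMap.BilinForm.finrank_orthogonal dotProductBilin_nondegenerate
    (suppSub Mᶜ)
  have h_le := Submodule.finrank_le (suppSub Mᶜ)
  rw [← pairPerp_eq_orthogonal, pairPerp_suppSub, compl_compl] at h_perp
  simp only [finrank_fin_fun] at h_perp h_le
  omega

theorem finrank_pairPerp_inf_suppSub_add (W : Submodule (ZMod 2) (Fin n → ZMod 2))
    (M : Set (Fin n)) :
    finrank (ZMod 2) (pairPerp W ⊓ suppSub M : Submodule (ZMod 2) (Fin n → ZMod 2))
        + finrank (ZMod 2) W + finrank (ZMod 2) (suppSub Mᶜ)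
      = n + finrank (ZMod 2) (W ⊓ suppSub Mᶜ : Submodule (ZMod 2) (Fin n → ZMod 2)) := by
  have h := LinearMap.BilinForm.finrank_orthogonal_inf_orthogonal_add
    dotProductBilin_nondegenerate W (suppSub Mᶜ)
  rwa [← pairPerp_eq_orthogonal, ← pairPerp_eq_orthogonal, pairPerp_suppSub, compl_compl,
    finrank_fin_fun] at h

end CSS

theorem stmt6_general (n : ℕ) (GX GZ : Submodule (ZMod 2) (Fin n → ZMod 2))
    (SZ : Submodule (ZMod 2) (Fin n → ZMod 2))
    (hSZ : SZ = GZ ⊓ pairPerp GX)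
    (k : ℕ)
    (hkX : k + finrank (ZMod 2) GX + finrank (ZMod 2) SZ = n)
    (M : Set (Fin n)) :
    (finrank (ZMod 2) (pairPerp GX ⊓ suppSub M : Submodule (ZMod 2) (Fin n → ZMod 2))
        - finrank (ZMod 2) (SZ ⊓ suppSub M : Submodule (ZMod 2) (Fin n → ZMod 2)))
      + (finrank (ZMod 2) (pairPerp SZ ⊓ suppSub Mᶜ : Submodule (ZMod 2) (Fin n → ZMod 2))
        - finrank (ZMod 2) (GX ⊓ suppSub Mᶜ : Submodule (ZMod 2) (Fin n → ZMod 2))) = k := by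
  have hSZ_le : SZ ≤ pairPerp GX := hSZ ▸ inf_le_right
  have hGX_le : GX ≤ pairPerp SZ := (le_pairPerp_pairPerp GX).trans (pairPerp_anti hSZ_le)
  have hZ_mono := Submodule.finrank_mono (inf_le_inf_right (suppSub M) hSZ_le)
  have hX_mono := Submodule.finrank_mono (inf_le_inf_right (suppSub Mᶜ) hGX_le)
  have hZ := finrank_pairPerp_inf_suppSub_add GX M
  have hX := finrank_pairPerp_inf_suppSub_add SZ Mᶜ
  rw [compl_compl] at hX
  have h_supp := finrank_suppSub_add_finrank_suppSub_compl M
  omega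

/-- CSS Cleaning Lemma: with `S^Z = G^Z ∩ (G^X)^⊥`, `S^X = G^X ∩ (G^Z)^⊥` and
`k = n − dim G^X − dim S^Z = n − dim G^Z − dim S^X`, for any partition of the
coordinates into `M` and `M^c` one has `g_bare^Z(M) + g^X(M^c) = k`. -/
theorem stmt6 (n : ℕ) (GX GZ : Submodule (ZMod 2) (Fin n → ZMod 2))
    (SZ SX : Submodule (ZMod 2) (Fin n → ZMod 2))
    (hSZ : SZ = GZ ⊓ pairPerp GX) (hSX : SX = GX ⊓ pairPerp GZ)
    (k : ℕ)
    (hkX : k + finrank (ZMod 2) GX + finrank (ZMod 2) SZ = n)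
    (hkZ : k + finrank (ZMod 2) GZ + finrank (ZMod 2) SX = n)
    (M : Set (Fin n)) :
    (finrank (ZMod 2) (pairPerp GX ⊓ suppSub M : Submodule (ZMod 2) (Fin n → ZMod 2))
        - finrank (ZMod 2) (SZ ⊓ suppSub M : Submodule (ZMod 2) (Fin n → ZMod 2)))
      + (finrank (ZMod 2) (pairPerp SZ ⊓ suppSub Mᶜ : Submodule (ZMod 2) (Fin n → ZMod 2))
        - finrank (ZMod 2) (GX ⊓ suppSub Mᶜ : Submodule (ZMod 2) (Fin n → ZMod 2))) = k :=
  stmt6_general n GX GZ SZ hSZ k hkX M
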